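/- Let g be a simple Lie algebra and let Δ(1) = {γ ∈ Δ^+ : (γ, θ^∨) = 1} and Δ(2) = {θ}, coming from the Z-grading associated to the highest root θ (the minimal nilpotent orbit grading). If g is simply-laced with θ a fundamental weight (types D_n and E_n), then dim g(1) = 2h − 4 and #E(1) = 3h − 6, so #E(1) = (3/2)·dim g(1). -/

import Mathlib

open scoped Classical

/-- A (reduced, crystallographic) simple root system of rank `n`, realized in `ℝ^n`
with the standard inner product `Σ αₜβₜ`, together with a choice of base (simple
roots) `sroot`. -/
structure SimpleRootSystem (n : ℕ) where
  Δ : Finset (Fin n → ℝ)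
  sroot : Fin n → Fin n → ℝ
  sroot_mem : ∀ i, sroot i ∈ Δ
  sroot_indep : LinearIndependent ℝ sroot
  nonzero : ∀ α ∈ Δ, α ≠ (0 : Fin n → ℝ)
  reflect : ∀ α ∈ Δ, ∀ β ∈ Δ,
    β - ((2 * (∑ t, α t * β t) / (∑ t, α t * α t)) • α) ∈ Δ
  integral : ∀ α ∈ Δ, ∀ β ∈ Δ,
    ∃ z : ℤ, (z : ℝ) * (∑ t, α t * α t) = 2 * (∑ t, α t * β t)
  reduced : ∀ α ∈ Δ, ∀ c : ℝ, c • α ∈ Δ → c = 1 ∨ c = -1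
  base : ∀ α ∈ Δ, (∃ c : Fin n → ℕ, α = ∑ i, (c i : ℝ) • sroot i) ∨
      (∃ c : Fin n → ℕ, α = -(∑ i, (c i : ℝ) • sroot i))
  irreducible : ∀ s : Finset (Fin n),
      (∀ i ∈ s, ∀ j ∉ s, (∑ t, sroot i t * sroot j t) = 0) → s = ∅ ∨ s = Finset.univ

/-- `Δ(1) = {γ ∈ Δ⁺ : (γ, θ∨) = 1}` for the minimal nilpotent orbit `ℤ`-grading
associated to the highest root `θ`.  (Since `g` is simply laced, `(γ, θ∨) = 1` reads
`2(γ,θ) = (θ,θ)`.) -/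
noncomputable def deltaOneMin {n : ℕ} (R : SimpleRootSystem n) (θ : Fin n → ℝ) :
    Finset (Fin n → ℝ) :=
  R.Δ.filter (fun γ => (∃ c : Fin n → ℕ, γ = ∑ i, (c i : ℝ) • R.sroot i) ∧
    2 * (∑ t, γ t * θ t) = ∑ t, θ t * θ t)

/-- The Hasse edges of `Δ(1)` with respect to the simple roots orthogonal to `θ`
(the simple roots of `g(0)`): pairs `(μ, i)` with `(αᵢ, θ) = 0` and `μ − αᵢ ∈ Δ(1)`. -/
noncomputable def edgesOneMin {n : ℕ} (R : SimpleRootSystem n) (θ : Fin n → ℝ) :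
    Finset ((Fin n → ℝ) × Fin n) :=
  (deltaOneMin R θ ×ˢ
      Finset.univ.filter (fun i => (∑ t, R.sroot i t * θ t) = 0)).filter
    (fun p => p.1 - R.sroot p.2 ∈ deltaOneMin R θ)

namespace MinNilAux

variable {n : ℕ}

/-- The standard bilinear form on `ℝ^n`. -/
def rip (x y : Fin n → ℝ) : ℝ := ∑ t, x t * y t

lemma rip_comm (x y : Fin n → ℝ) : rip x y = rip y x := by
  simp [rip, mul_comm]

lemma rip_sub_left (x y z : Fin n → ℝ) : rip (x - y) z = rip x z - rip y z := by
  simp [rip, sub_mul, Finset.sum_sub_distrib]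

lemma rip_add_left (x y z : Fin n → ℝ) : rip (x + y) z = rip x z + rip y z := by
  simp [rip, add_mul, Finset.sum_add_distrib]

lemma rip_smul_left (c : ℝ) (x y : Fin n → ℝ) : rip (c • x) y = c * rip x y := by
  simp [rip, Finset.mul_sum, mul_assoc]

lemma rip_neg_left (x y : Fin n → ℝ) : rip (-x) y = - rip x y := by
  simp [rip, Finset.sum_neg_distrib]

lemma rip_sub_right (x y z : Fin n → ℝ) : rip x (y - z) = rip x y - rip x z := by
  rw [rip_comm, rip_sub_left, rip_comm y x, rip_comm z x]

lemma rip_add_right (x y z : Fin n → ℝ) : rip x (y + z) = rip x y + rip x z := by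
  rw [rip_comm, rip_add_left, rip_comm y x, rip_comm z x]

lemma rip_smul_right (c : ℝ) (x y : Fin n → ℝ) : rip x (c • y) = c * rip x y := by
  rw [rip_comm, rip_smul_left, rip_comm]

lemma rip_neg_right (x y : Fin n → ℝ) : rip x (-y) = - rip x y := by
  rw [rip_comm, rip_neg_left, rip_comm]

lemma rip_self_nonneg (x : Fin n → ℝ) : 0 ≤ rip x x :=
  Finset.sum_nonneg fun t _ => mul_self_nonneg _

lemma eq_of_rip_self_sub_eq_zero {x y : Fin n → ℝ} (h : rip (x - y) (x - y) = 0) : x = y := by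
  have h2 : ∀ t ∈ Finset.univ, (x - y) t * (x - y) t = 0 :=
    (Finset.sum_eq_zero_iff_of_nonneg (fun t _ => mul_self_nonneg ((x - y) t))).mp h
  funext t
  have h3 := mul_self_eq_zero.mp (h2 t (Finset.mem_univ t))
  have h4 : x t - y t = 0 := by simpa using h3
  linarith

lemma rip_pos_of_ne_zero {x : Fin n → ℝ} (hx : x ≠ 0) : 0 < rip x x := by
  rcases lt_or_eq_of_le (rip_self_nonneg x) with h | h
  · exact h
  · exact absurd (eq_of_rip_self_sub_eq_zero (x := x) (y := 0) (by simpa using h.symm)) hx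

lemma rip_sum_left {ι : Type*} (s : Finset ι) (f : ι → Fin n → ℝ) (y : Fin n → ℝ) :
    rip (∑ i ∈ s, f i) y = ∑ i ∈ s, rip (f i) y := by
  simp only [rip, Finset.sum_apply, Finset.sum_mul]
  exact Finset.sum_comm

lemma eig {L : ℝ} (hL : L ≠ 0) (S : Finset (Fin n → ℝ)) (β : Fin n → ℝ) (hβ : rip β β = L)
    (hstab : ∀ γ ∈ S, γ - ((2 * rip β γ / L) • β) ∈ S) :
    (∑ γ ∈ S, rip γ β • γ) = ((∑ γ ∈ S, rip γ β ^ 2) / L) • β := by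
  set σ : (Fin n → ℝ) → (Fin n → ℝ) := fun x => x - (2 * rip β x / L) • β with hσ
  have hipσ : ∀ x, rip β (σ x) = - rip β x := by
    intro x
    simp only [hσ, rip_sub_right, rip_smul_right, hβ]
    field_simp
    ring
  have hσσ : ∀ x, σ (σ x) = x := by
    intro x
    have hc : 2 * rip β (σ x) / L = -(2 * rip β x / L) := by rw [hipσ]; ring
    have h1 : σ (σ x) = σ x - (2 * rip β (σ x) / L) • β := rfl
    rw [h1, hc, neg_smul, sub_neg_eq_add]
    show x - (2 * rip β x / L) • β + (2 * rip β x / L) • β = x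
    abel
  have key : (∑ γ ∈ S, rip γ β • σ γ) = ∑ δ ∈ S, (- rip δ β) • δ := by
    apply Finset.sum_nbij' (i := σ) (j := σ) (fun γ hγ => hstab γ hγ) (fun γ hγ => hstab γ hγ)
      (fun γ _ => hσσ γ) (fun γ _ => hσσ γ)
    intro γ _
    have h2 : rip (σ γ) β = - rip γ β := by rw [rip_comm, hipσ, rip_comm]
    rw [h2, neg_neg]
  have hsc : (∑ γ ∈ S, rip γ β * (2 * rip β γ / L)) = (2/L) * ∑ γ ∈ S, rip γ β ^ 2 := by
    rw [Finset.mul_sum]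
    apply Finset.sum_congr rfl
    intro γ _
    rw [rip_comm β γ]
    ring
  have expand : (∑ γ ∈ S, rip γ β • σ γ)
      = (∑ γ ∈ S, rip γ β • γ) - ((2/L) * ∑ γ ∈ S, rip γ β ^ 2) • β := by
    simp only [hσ, smul_sub, smul_smul]
    rw [Finset.sum_sub_distrib, ← Finset.sum_smul, hsc]
  have hneg : (∑ δ ∈ S, (- rip δ β) • δ) = - ∑ γ ∈ S, rip γ β • γ := by
    rw [← Finset.sum_neg_distrib]
    apply Finset.sum_congr rfl
    intro γ _
    simp
  set v := ∑ γ ∈ S, rip γ β • γ with hv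
  set Q := ∑ γ ∈ S, rip γ β ^ 2 with hQ
  have h3 : v - ((2/L) * Q) • β = - v := by rw [← expand, key, hneg]
  have h3' : v = -v + ((2/L) * Q) • β := by rw [← h3]; abel
  have h4 : v + v = ((2/L) * Q) • β := by
    nth_rewrite 1 [h3']
    abel
  have hsc2 : ((Q/L) : ℝ) • β = (2⁻¹ : ℝ) • (((2/L) * Q) • β) := by
    rw [smul_smul]
    congr 1
    field_simp
  rw [hsc2, ← h4]
  module

/-- `rip γ ·` as a linear map. -/
def ripL (γ : Fin n → ℝ) : (Fin n → ℝ) →ₗ[ℝ] ℝ where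
  toFun := fun x => rip γ x
  map_add' := by
    intro x y
    simp [rip, mul_add, Finset.sum_add_distrib]
  map_smul' := by
    intro c x
    simp [rip, Finset.mul_sum]
    ring_nf
    simp [mul_comm, mul_assoc, mul_left_comm]

/-- the operator `x ↦ ∑_{γ ∈ S} (γ, x) γ`. -/
noncomputable def opS (S : Finset (Fin n → ℝ)) : (Fin n → ℝ) →ₗ[ℝ] (Fin n → ℝ) :=
  ∑ γ ∈ S, (ripL γ).smulRight γ

lemma opS_apply (S : Finset (Fin n → ℝ)) (x : Fin n → ℝ) :
    opS S x = ∑ γ ∈ S, rip γ x • γ := by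
  simp [opS, LinearMap.sum_apply, LinearMap.smulRight_apply, ripL]
  rfl

lemma trace_opS (S : Finset (Fin n → ℝ)) :
    LinearMap.trace ℝ (Fin n → ℝ) (opS S) = ∑ γ ∈ S, rip γ γ := by
  rw [LinearMap.trace_eq_matrix_trace ℝ (Pi.basisFun ℝ (Fin n)), Matrix.trace]
  have hdiag : ∀ t, Matrix.diag (LinearMap.toMatrix (Pi.basisFun ℝ (Fin n))
      (Pi.basisFun ℝ (Fin n)) (opS S)) t = ∑ γ ∈ S, γ t * γ t := by
    intro t
    rw [Matrix.diag_apply, LinearMap.toMatrix_apply]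
    simp only [Pi.basisFun_apply, Pi.basisFun_repr]
    rw [opS_apply]
    rw [Finset.sum_apply]
    apply Finset.sum_congr rfl
    intro γ _
    have : rip γ (Pi.single t 1) = γ t := by
      simp [rip, Pi.single_apply, mul_ite]
    simp [this]
  rw [Finset.sum_congr rfl (fun t _ => hdiag t)]
  rw [Finset.sum_comm]
  apply Finset.sum_congr rfl
  intro γ _
  rfl

lemma trace_diag (b : Module.Basis (Fin n) ℝ (Fin n → ℝ)) (f : (Fin n → ℝ) →ₗ[ℝ] (Fin n → ℝ))
    (d : Fin n → ℝ) (h : ∀ j, f (b j) = d j • b j) :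
    LinearMap.trace ℝ (Fin n → ℝ) f = ∑ j, d j := by
  rw [LinearMap.trace_eq_matrix_trace ℝ b, Matrix.trace]
  apply Finset.sum_congr rfl
  intro j _
  rw [Matrix.diag_apply, LinearMap.toMatrix_apply, h j, map_smul]
  simp [Module.Basis.repr_self]

end MinNilAux

set_option maxHeartbeats 1600000 in
open MinNilAux in
/-- Let `g` be a simply-laced simple Lie algebra with highest root `θ`, and consider
the `ℤ`-grading associated to the minimal nilpotent orbit, with
`Δ(1) = {γ ∈ Δ⁺ : (γ, θ∨) = 1}`.  If `θ` is a fundamental weight (exactly one simple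
root is not orthogonal to `θ`; types `D_n`, `E_n`), then `dim g(1) = 2h − 4` and
`#E(1) = 3h − 6`, so `#E(1) = (3/2)·dim g(1)`; here `h = |Δ|/n` is the Coxeter
number. -/
theorem minimal_nilpotent_grading_count (n : ℕ) (hn : 0 < n) (R : SimpleRootSystem n)
    (hsl : ∀ α ∈ R.Δ, ∀ β ∈ R.Δ, (∑ t, α t * α t) = (∑ t, β t * β t))
    (θ : Fin n → ℝ) (hθmem : θ ∈ R.Δ)
    (hθhigh : ∀ γ ∈ R.Δ, ∃ c : Fin n → ℕ, θ - γ = ∑ i, (c i : ℝ) • R.sroot i)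
    (hfund : (Finset.univ.filter (fun i => (∑ t, R.sroot i t * θ t) ≠ 0)).card = 1) :
    (deltaOneMin R θ).card = 2 * (R.Δ.card / n) - 4 ∧
    (edgesOneMin R θ).card = 3 * (R.Δ.card / n) - 6 ∧
    2 * (edgesOneMin R θ).card = 3 * (deltaOneMin R θ).card := by
  classical
  set L : ℝ := rip θ θ with hLdef
  have hLpos : 0 < L := rip_pos_of_ne_zero (R.nonzero θ hθmem)
  have hL0 : L ≠ 0 := ne_of_gt hLpos
  -- all roots have the same length
  have hlen : ∀ γ ∈ R.Δ, rip γ γ = L := by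
    intro γ hγ
    exact hsl γ hγ θ hθmem
  -- expansion facts
  have hexp_sub : ∀ α ∈ R.Δ, ∀ β ∈ R.Δ, rip (α - β) (α - β) = 2*L - 2 * rip α β := by
    intro α hα β hβ
    rw [rip_sub_left, rip_sub_right, rip_sub_right, hlen α hα, hlen β hβ, rip_comm β α]
    ring
  have hexp_add : ∀ α ∈ R.Δ, ∀ β ∈ R.Δ, rip (α + β) (α + β) = 2*L + 2 * rip α β := by
    intro α hα β hβ
    rw [rip_add_left, rip_add_right, rip_add_right, hlen α hα, hlen β hβ, rip_comm β α]
    ring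
  -- the five possible values of 2(α,β)
  have hz5 : ∀ α ∈ R.Δ, ∀ β ∈ R.Δ, 2*rip α β = -(2*L) ∨ 2*rip α β = -L ∨ 2*rip α β = 0 ∨
      2*rip α β = L ∨ 2*rip α β = 2*L := by
    intro α hα β hβ
    obtain ⟨z, hz⟩ := R.integral α hα β hβ
    have hz' : (z:ℝ) * L = 2 * rip α β := by
      rw [hLdef]
      rw [show rip θ θ = (∑ t, α t * α t) from (hsl α hα θ hθmem).symm]
      exact hz
    have hub : (z:ℝ) ≤ 2 := by
      have h1 := rip_self_nonneg (α - β)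
      rw [hexp_sub α hα β hβ] at h1
      nlinarith
    have hlb : (-2:ℝ) ≤ (z:ℝ) := by
      have h1 := rip_self_nonneg (α + β)
      rw [hexp_add α hα β hβ] at h1
      nlinarith
    have hubz : z ≤ 2 := by exact_mod_cast hub
    have hlbz : -2 ≤ z := by exact_mod_cast hlb
    interval_cases z
    · exact Or.inl (by push_cast at hz'; linarith)
    · exact Or.inr (Or.inl (by push_cast at hz'; linarith))
    · exact Or.inr (Or.inr (Or.inl (by push_cast at hz'; linarith)))
    · exact Or.inr (Or.inr (Or.inr (Or.inl (by push_cast at hz'; linarith))))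
    · exact Or.inr (Or.inr (Or.inr (Or.inr (by push_cast at hz'; linarith))))
  -- equality cases
  have heq2 : ∀ α ∈ R.Δ, ∀ β ∈ R.Δ, 2 * rip α β = 2*L → α = β := by
    intro α hα β hβ h
    apply eq_of_rip_self_sub_eq_zero
    rw [hexp_sub α hα β hβ]
    linarith
  have heqm2 : ∀ α ∈ R.Δ, ∀ β ∈ R.Δ, 2 * rip α β = -(2*L) → α = -β := by
    intro α hα β hβ h
    apply eq_of_rip_self_sub_eq_zero (x := α) (y := -β)
    rw [sub_neg_eq_add, hexp_add α hα β hβ]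
    linarith
  -- reflections
  have hstabΔ : ∀ β ∈ R.Δ, ∀ γ ∈ R.Δ, γ - ((2 * rip β γ / L) • β) ∈ R.Δ := by
    intro β hβ γ hγ
    have h := R.reflect β hβ γ hγ
    have hd : (∑ t, β t * β t) = L := hlen β hβ
    rw [hd] at h
    exact h
  have hnegmem : ∀ γ ∈ R.Δ, -γ ∈ R.Δ := by
    intro γ hγ
    have h := hstabΔ γ hγ γ hγ
    have hc : 2 * rip γ γ / L = 2 := by rw [hlen γ hγ]; field_simp
    rw [hc] at h
    have : γ - (2:ℝ) • γ = -γ := by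
      rw [two_smul]; abel
    rwa [this] at h
  -- string lemmas
  have hdown : ∀ μ ∈ R.Δ, ∀ α ∈ R.Δ, 2 * rip μ α = L → μ - α ∈ R.Δ := by
    intro μ hμ α hα h
    have h2 := hstabΔ α hα μ hμ
    have hc : 2 * rip α μ / L = 1 := by rw [rip_comm α μ, h]; field_simp
    rw [hc, one_smul] at h2
    exact h2
  have hup : ∀ μ ∈ R.Δ, ∀ α ∈ R.Δ, 2 * rip μ α = -L → μ + α ∈ R.Δ := by
    intro μ hμ α hα h
    have h2 := hstabΔ α hα μ hμ
    have hc : 2 * rip α μ / L = -1 := by rw [rip_comm α μ, h]; field_simp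
    rw [hc, neg_one_smul, sub_neg_eq_add] at h2
    exact h2
  have hsub_ip : ∀ μ ∈ R.Δ, ∀ α ∈ R.Δ, μ - α ∈ R.Δ → 2 * rip μ α = L := by
    intro μ hμ α hα h
    have h1 := hlen (μ - α) h
    rw [hexp_sub μ hμ α hα] at h1
    linarith
  -- linear independence helper
  have hindep_nat : ∀ (c : Fin n → ℕ) (i : Fin n) (k : ℕ), 0 < k →
      (∑ j, (c j:ℝ) • R.sroot j) + (k:ℝ) • R.sroot i ≠ 0 := by
    intro c i k hk h
    have hg : ∑ j, ((fun j => (c j : ℝ) + if j = i then (k:ℝ) else 0) j) • R.sroot j = 0 := by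
      have : ∀ j ∈ Finset.univ, ((c j : ℝ) + if j = i then (k:ℝ) else 0) • R.sroot j
          = (c j : ℝ) • R.sroot j + (if j = i then (k:ℝ) else 0) • R.sroot j := by
        intro j _
        rw [add_smul]
      rw [Finset.sum_congr rfl this, Finset.sum_add_distrib]
      have h2 : ∑ j, (if j = i then (k:ℝ) else 0) • R.sroot j = (k:ℝ) • R.sroot i := by
        rw [Finset.sum_eq_single i]
        · simp
        · intro b _ hb; simp [hb]
        · intro hb; exact absurd (Finset.mem_univ i) hb
      rw [h2]
      exact h
    have h2 := Fintype.linearIndependent_iff.mp R.sroot_indep _ hg i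
    simp at h2
    have hck : (0:ℝ) < (c i : ℝ) + (k:ℝ) := by positivity
    linarith
  -- simple roots pair nonnegatively with θ
  have hge : ∀ i, 0 ≤ rip (R.sroot i) θ := by
    intro i
    by_contra hlt
    push_neg at hlt
    have hαmem := R.sroot_mem i
    rcases hz5 (R.sroot i) hαmem θ hθmem with h|h|h|h|h
    · -- θ = -(sroot i): impossible since θ - sroot i is an ℕ-combination
      have hθ : R.sroot i = -θ := heqm2 _ hαmem _ hθmem h
      obtain ⟨c, hc⟩ := hθhigh (R.sroot i) hαmem
      have : θ - R.sroot i = (-2:ℝ) • R.sroot i := by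
        rw [show θ = -(R.sroot i) by rw [hθ]; simp]
        module
      rw [this] at hc
      have h0 : (∑ j, (c j:ℝ) • R.sroot j) + (2:ℝ) • R.sroot i = 0 := by
        rw [← hc]; module
      exact hindep_nat c i 2 (by norm_num) (by exact_mod_cast h0)
    · -- θ + sroot i is a root: contradiction with highest
      have hsum : θ + R.sroot i ∈ R.Δ := by
        apply hup θ hθmem (R.sroot i) hαmem
        rw [rip_comm]; exact h
      obtain ⟨c, hc⟩ := hθhigh (θ + R.sroot i) hsum
      have : θ - (θ + R.sroot i) = -(R.sroot i) := by abel
      rw [this] at hc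
      have h0 : (∑ j, (c j:ℝ) • R.sroot j) + (1:ℝ) • R.sroot i = 0 := by
        rw [← hc]; module
      exact hindep_nat c i 1 (by norm_num) (by exact_mod_cast h0)
    · linarith
    · linarith
    · nlinarith
  -- positivity from positive pairing with θ
  have hpos_of : ∀ γ ∈ R.Δ, 0 < rip γ θ →
      (∃ c : Fin n → ℕ, γ = ∑ i, (c i : ℝ) • R.sroot i) := by
    intro γ hγ hpos
    rcases R.base γ hγ with h | ⟨c, hc⟩
    · exact h
    · exfalso
      have : rip γ θ = - ∑ i, (c i : ℝ) * rip (R.sroot i) θ := by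
        rw [hc, rip_neg_left, rip_sum_left]
        congr 1
        apply Finset.sum_congr rfl
        intro i _
        rw [rip_smul_left]
      have hle : rip γ θ ≤ 0 := by
        rw [this]
        simp only [neg_nonpos]
        apply Finset.sum_nonneg
        intro i _
        exact mul_nonneg (by positivity) (hge i)
      linarith
  -- the five pieces of Δ
  set A := R.Δ.filter (fun γ => 2 * rip γ θ = 2*L) with hAdef
  set B := R.Δ.filter (fun γ => 2 * rip γ θ = L) with hBdef
  set C := R.Δ.filter (fun γ => 2 * rip γ θ = 0) with hCdef
  set B' := R.Δ.filter (fun γ => 2 * rip γ θ = -L) with hB'def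
  set A' := R.Δ.filter (fun γ => 2 * rip γ θ = -(2*L)) with hA'def
  have hA : A = {θ} := by
    rw [Finset.eq_singleton_iff_unique_mem]
    constructor
    · rw [hAdef, Finset.mem_filter]
      exact ⟨hθmem, by rw [hLdef]⟩
    · intro γ hγ
      rw [hAdef, Finset.mem_filter] at hγ
      exact heq2 γ hγ.1 θ hθmem hγ.2
  have hA' : A' = {-θ} := by
    rw [Finset.eq_singleton_iff_unique_mem]
    constructor
    · rw [hA'def, Finset.mem_filter]
      refine ⟨hnegmem θ hθmem, ?_⟩
      rw [rip_neg_left, ← hLdef]; ring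
    · intro γ hγ
      rw [hA'def, Finset.mem_filter] at hγ
      exact heqm2 γ hγ.1 θ hθmem hγ.2
  -- Δ(1) equals B
  have hBD : deltaOneMin R θ = B := by
    rw [deltaOneMin, hBdef]
    apply Finset.filter_congr
    intro γ hγ
    constructor
    · intro h
      exact h.2
    · intro h
      refine ⟨hpos_of γ hγ ?_, h⟩
      have : 2 * rip γ θ = L := h
      linarith
  -- membership lemmas
  have hBmem : ∀ γ, γ ∈ B ↔ (γ ∈ R.Δ ∧ 2 * rip γ θ = L) := by
    intro γ; rw [hBdef]; exact Finset.mem_filter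
  have hCmem : ∀ γ, γ ∈ C ↔ (γ ∈ R.Δ ∧ 2 * rip γ θ = 0) := by
    intro γ; rw [hCdef]; exact Finset.mem_filter
  -- the five-way splitting of sums over Δ
  have hsplit : ∀ F : (Fin n → ℝ) → ℝ,
      ∑ γ ∈ R.Δ, F γ = (∑ γ ∈ A, F γ) + (∑ γ ∈ B, F γ) + (∑ γ ∈ C, F γ)
        + (∑ γ ∈ B', F γ) + (∑ γ ∈ A', F γ) := by
    intro F
    have step : ∀ γ ∈ R.Δ, F γ = (if 2*rip γ θ = 2*L then F γ else 0)
        + (if 2*rip γ θ = L then F γ else 0) + (if 2*rip γ θ = 0 then F γ else 0)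
        + (if 2*rip γ θ = -L then F γ else 0) + (if 2*rip γ θ = -(2*L) then F γ else 0) := by
      intro γ hγ
      rcases hz5 γ hγ θ hθmem with h|h|h|h|h <;> rw [h]
      · rw [if_neg (by intro hh; linarith), if_neg (by intro hh; linarith),
          if_neg (by intro hh; linarith), if_neg (by intro hh; linarith), if_pos rfl]
        ring
      · rw [if_neg (by intro hh; linarith), if_neg (by intro hh; linarith),
          if_neg (by intro hh; linarith), if_pos rfl, if_neg (by intro hh; linarith)]
        ring
      · rw [if_neg (by intro hh; linarith), if_neg (by intro hh; linarith), if_pos rfl,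
          if_neg (by intro hh; linarith), if_neg (by intro hh; linarith)]
        ring
      · rw [if_neg (by intro hh; linarith), if_pos rfl, if_neg (by intro hh; linarith),
          if_neg (by intro hh; linarith), if_neg (by intro hh; linarith)]
        ring
      · rw [if_pos rfl, if_neg (by intro hh; linarith), if_neg (by intro hh; linarith),
          if_neg (by intro hh; linarith), if_neg (by intro hh; linarith)]
        ring
    rw [Finset.sum_congr rfl step]
    rw [Finset.sum_add_distrib, Finset.sum_add_distrib, Finset.sum_add_distrib,
      Finset.sum_add_distrib]
    rw [← Finset.sum_filter, ← Finset.sum_filter, ← Finset.sum_filter, ← Finset.sum_filter,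
      ← Finset.sum_filter]
  -- transfer sums from B' to B via negation
  have hBB' : ∀ F : (Fin n → ℝ) → ℝ, (∀ x, F (-x) = F x) →
      ∑ γ ∈ B', F γ = ∑ γ ∈ B, F γ := by
    intro F hFeven
    apply Finset.sum_nbij' (i := fun γ => -γ) (j := fun γ => -γ)
    · intro γ hγ
      rw [hB'def, Finset.mem_filter] at hγ
      rw [hBdef, Finset.mem_filter]
      refine ⟨hnegmem γ hγ.1, ?_⟩
      rw [rip_neg_left]
      linarith [hγ.2]
    · intro γ hγ
      rw [hBdef, Finset.mem_filter] at hγ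
      rw [hB'def, Finset.mem_filter]
      refine ⟨hnegmem γ hγ.1, ?_⟩
      rw [rip_neg_left]
      linarith [hγ.2]
    · intro γ _; simp
    · intro γ _; simp
    · intro γ _; exact (hFeven γ).symm
  set m := B.card with hmdef
  -- m is even via the fixed-point-free involution γ ↦ θ - γ
  have hBinv : ∀ γ ∈ B, θ - γ ∈ B := by
    intro γ hγ
    rw [hBdef, Finset.mem_filter] at hγ ⊢
    refine ⟨hdown θ hθmem γ hγ.1 (by rw [rip_comm]; exact hγ.2), ?_⟩
    rw [rip_sub_left, ← hLdef]
    linarith [hγ.2]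
  have hBne : ∀ γ ∈ B, θ - γ ≠ γ := by
    intro γ hγ heq
    rw [hBdef, Finset.mem_filter] at hγ
    have hθγ : θ = γ + γ := by
      calc θ = (θ - γ) + γ := by abel
      _ = γ + γ := by rw [heq]
    have h1 : L = 4 * L := by
      calc L = rip θ θ := hLdef
      _ = rip (γ + γ) (γ + γ) := by rw [← hθγ]
      _ = 4 * L := by
          rw [rip_add_left, rip_add_right, hlen γ hγ.1]
          ring
    linarith
  have hmeven : Even m := by
    have hzm : ((m : ℕ) : ZMod 2) = 0 := by
      have hsum : ∑ _γ ∈ B, (1 : ZMod 2) = 0 := by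
        apply Finset.sum_involution (g := fun γ _ => θ - γ)
        · intro γ _; decide
        · intro γ hγ _; exact hBne γ hγ
        · intro γ hγ; exact hBinv γ hγ
        · intro γ _; abel
      rw [Finset.sum_const] at hsum
      simpa using hsum
    have := (ZMod.natCast_eq_zero_iff m 2).mp hzm
    exact even_iff_two_dvd.mpr this
  -- eigenvalue machinery on the whole of Δ
  haveI : Nonempty (Fin n) := ⟨⟨0, hn⟩⟩
  have hcard : Fintype.card (Fin n) = Module.finrank ℝ (Fin n → ℝ) := by
    simp [Module.finrank_fin_fun]
  set bΔ := basisOfLinearIndependentOfCardEqFinrank R.sroot_indep hcard with hbΔdef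
  have hbΔ : ⇑bΔ = R.sroot := coe_basisOfLinearIndependentOfCardEqFinrank _ _
  set QΔ : Fin n → ℝ := fun i => ∑ γ ∈ R.Δ, rip γ (R.sroot i) ^ 2 with hQΔdef
  have heigΔ : ∀ i, (∑ γ ∈ R.Δ, rip γ (R.sroot i) • γ) = (QΔ i / L) • R.sroot i := by
    intro i
    exact eig hL0 R.Δ (R.sroot i) (hlen _ (R.sroot_mem i))
      (fun γ hγ => hstabΔ _ (R.sroot_mem i) γ hγ)
  have hsum_pair : ∀ i j, rip (∑ γ ∈ R.Δ, rip γ (R.sroot i) • γ) (R.sroot j)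
      = ∑ γ ∈ R.Δ, rip γ (R.sroot i) * rip γ (R.sroot j) := by
    intro i j
    rw [rip_sum_left]
    apply Finset.sum_congr rfl
    intro γ _
    rw [rip_smul_left]
  have h_eq : ∀ i j, rip (R.sroot i) (R.sroot j) ≠ 0 → QΔ i = QΔ j := by
    intro i j hne
    have e1 : (QΔ i / L) * rip (R.sroot i) (R.sroot j)
        = ∑ γ ∈ R.Δ, rip γ (R.sroot i) * rip γ (R.sroot j) := by
      rw [← hsum_pair i j, heigΔ i, rip_smul_left]
    have e2 : (QΔ j / L) * rip (R.sroot j) (R.sroot i)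
        = ∑ γ ∈ R.Δ, rip γ (R.sroot j) * rip γ (R.sroot i) := by
      rw [← hsum_pair j i, heigΔ j, rip_smul_left]
    have e2' : (∑ γ ∈ R.Δ, rip γ (R.sroot i) * rip γ (R.sroot j))
        = ∑ γ ∈ R.Δ, rip γ (R.sroot j) * rip γ (R.sroot i) :=
      Finset.sum_congr rfl (fun γ _ => mul_comm _ _)
    have e3 : (QΔ i / L) * rip (R.sroot i) (R.sroot j)
        = (QΔ j / L) * rip (R.sroot i) (R.sroot j) := by
      calc (QΔ i / L) * rip (R.sroot i) (R.sroot j)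
          = ∑ γ ∈ R.Δ, rip γ (R.sroot i) * rip γ (R.sroot j) := e1
      _ = ∑ γ ∈ R.Δ, rip γ (R.sroot j) * rip γ (R.sroot i) := e2'
      _ = (QΔ j / L) * rip (R.sroot j) (R.sroot i) := e2.symm
      _ = (QΔ j / L) * rip (R.sroot i) (R.sroot j) := by rw [rip_comm]
    have e4 := mul_right_cancel₀ hne e3
    field_simp at e4
    exact e4
  set i₀ : Fin n := ⟨0, hn⟩ with hi₀def
  have hconst : ∀ j, QΔ j = QΔ i₀ := by
    have hirr := R.irreducible (Finset.univ.filter (fun j => QΔ j = QΔ i₀))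
    have hcond : ∀ i ∈ Finset.univ.filter (fun j => QΔ j = QΔ i₀),
        ∀ j ∉ Finset.univ.filter (fun j => QΔ j = QΔ i₀),
        (∑ t, R.sroot i t * R.sroot j t) = 0 := by
      intro i hi j hj
      by_contra hne
      rw [Finset.mem_filter] at hi
      have : QΔ j = QΔ i₀ := by
        rw [← h_eq i j hne]
        exact hi.2
      exact hj (Finset.mem_filter.mpr ⟨Finset.mem_univ j, this⟩)
    rcases hirr hcond with h | h
    · exfalso
      have : i₀ ∈ Finset.univ.filter (fun j => QΔ j = QΔ i₀) :=
        Finset.mem_filter.mpr ⟨Finset.mem_univ i₀, rfl⟩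
      rw [h] at this
      exact absurd this (Finset.notMem_empty i₀)
    · intro j
      have : j ∈ Finset.univ.filter (fun j => QΔ j = QΔ i₀) := by
        rw [h]; exact Finset.mem_univ j
      exact (Finset.mem_filter.mp this).2
  set Λ : ℝ := QΔ i₀ / L with hΛdef
  have hQL : ∀ j, QΔ j = Λ * L := by
    intro j
    rw [hconst j, hΛdef]
    field_simp
  have hopΔ : ∀ j, opS R.Δ (R.sroot j) = Λ • R.sroot j := by
    intro j
    rw [opS_apply, heigΔ j]
    congr 1
    rw [hQL j]
    field_simp
  have hopΔb : ∀ j, opS R.Δ (bΔ j) = Λ • bΔ j := by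
    intro j
    rw [show bΔ j = R.sroot j from congrFun hbΔ j]
    exact hopΔ j
  have htraceΔ : (n:ℝ) * Λ = (R.Δ.card : ℝ) * L := by
    have t1 := trace_opS (n := n) R.Δ
    have t2 := trace_diag bΔ (opS R.Δ) (fun _ => Λ) hopΔb
    rw [t2] at t1
    rw [Finset.sum_const, Finset.card_univ, Fintype.card_fin] at t1
    have t3 : ∑ γ ∈ R.Δ, rip γ γ = (R.Δ.card : ℝ) * L := by
      rw [Finset.sum_congr rfl hlen, Finset.sum_const]
      simp [mul_comm]
    rw [t3] at t1
    simpa [nsmul_eq_mul] using t1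
  -- Λ-eigenvector property extends to θ
  have hopΔθ : opS R.Δ θ = Λ • θ := by
    have hrep := Module.Basis.sum_repr bΔ θ
    calc opS R.Δ θ = opS R.Δ (∑ j, (bΔ.repr θ) j • bΔ j) := by rw [hrep]
    _ = ∑ j, (bΔ.repr θ) j • opS R.Δ (bΔ j) := by
        rw [map_sum]
        apply Finset.sum_congr rfl
        intro j _
        rw [map_smul]
    _ = ∑ j, (bΔ.repr θ) j • (Λ • bΔ j) := by
        apply Finset.sum_congr rfl
        intro j _
        rw [hopΔb j]
    _ = Λ • ∑ j, (bΔ.repr θ) j • bΔ j := by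
        rw [Finset.smul_sum]
        apply Finset.sum_congr rfl
        intro j _
        rw [smul_comm]
    _ = Λ • θ := by rw [hrep]
  have hsqθ : ∑ γ ∈ R.Δ, rip γ θ ^ 2 = Λ * L := by
    have e1 : rip (∑ γ ∈ R.Δ, rip γ θ • γ) θ = ∑ γ ∈ R.Δ, rip γ θ ^ 2 := by
      rw [rip_sum_left]
      apply Finset.sum_congr rfl
      intro γ _
      rw [rip_smul_left]
      ring
    have e2 : (∑ γ ∈ R.Δ, rip γ θ • γ) = Λ • θ := by
      rw [← opS_apply, hopΔθ]
    rw [← e1, e2, rip_smul_left, ← hLdef]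
  have hsqα : ∀ i, ∑ γ ∈ R.Δ, rip γ (R.sroot i) ^ 2 = Λ * L := by
    intro i
    rw [show ∑ γ ∈ R.Δ, rip γ (R.sroot i) ^ 2 = QΔ i from rfl, hQL i]
  -- the distinguished index jstar
  obtain ⟨jstar, hjs⟩ := Finset.card_eq_one.mp hfund
  have hmem_iff : ∀ j : Fin n, rip (R.sroot j) θ ≠ 0 ↔ j = jstar := by
    intro j
    constructor
    · intro h
      have : j ∈ Finset.univ.filter (fun i => (∑ t, R.sroot i t * θ t) ≠ 0) :=
        Finset.mem_filter.mpr ⟨Finset.mem_univ j, h⟩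
      rw [hjs] at this
      exact Finset.mem_singleton.mp this
    · intro hj
      have hmem2 : jstar ∈ Finset.univ.filter (fun i => (∑ t, R.sroot i t * θ t) ≠ 0) := by
        rw [hjs]; exact Finset.mem_singleton_self jstar
      rw [hj]
      exact (Finset.mem_filter.mp hmem2).2
  have horth : ∀ j : Fin n, j ≠ jstar → rip (R.sroot j) θ = 0 := by
    intro j hj
    by_contra h
    exact hj ((hmem_iff j).mp h)
  -- eigenvalue machinery on C
  set QC : Fin n → ℝ := fun j => ∑ γ ∈ C, rip γ (R.sroot j) ^ 2 with hQCdef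
  have hstabC : ∀ j : Fin n, j ≠ jstar → ∀ γ ∈ C,
      γ - ((2 * rip (R.sroot j) γ / L) • R.sroot j) ∈ C := by
    intro j hj γ hγ
    rw [hCdef, Finset.mem_filter] at hγ ⊢
    refine ⟨hstabΔ _ (R.sroot_mem j) γ hγ.1, ?_⟩
    rw [rip_sub_left, rip_smul_left, horth j hj]
    linarith [hγ.2]
  have hCeig : ∀ j : Fin n, j ≠ jstar →
      (∑ γ ∈ C, rip γ (R.sroot j) • γ) = (QC j / L) • R.sroot j := by
    intro j hj
    exact eig hL0 C (R.sroot j) (hlen _ (R.sroot_mem j)) (hstabC j hj)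
  -- the modified basis: replace sroot jstar by θ
  set G : Fin n → (Fin n → ℝ) := fun j => if j = jstar then θ else R.sroot j with hGdef
  have hGindep : LinearIndependent ℝ G := by
    rw [Fintype.linearIndependent_iff]
    intro g hg
    have h1 : ∑ j, g j * rip (G j) θ = 0 := by
      have : rip (∑ j, g j • G j) θ = 0 := by rw [hg]; simp [rip]
      rw [rip_sum_left] at this
      rw [← this]
      apply Finset.sum_congr rfl
      intro j _
      rw [rip_smul_left]
    have h2 : ∀ j ∈ Finset.univ.erase jstar, g j * rip (G j) θ = 0 := by
      intro j hj
      have hjne : j ≠ jstar := (Finset.mem_erase.mp hj).1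
      rw [hGdef]
      simp only [if_neg hjne]
      rw [horth j hjne]
      ring
    rw [← Finset.add_sum_erase _ _ (Finset.mem_univ jstar)] at h1
    rw [Finset.sum_eq_zero h2, add_zero] at h1
    have hGj : G jstar = θ := by rw [hGdef]; simp
    rw [hGj, ← hLdef] at h1
    have hgstar : g jstar = 0 := by
      rcases mul_eq_zero.mp h1 with h | h
      · exact h
      · exact absurd h hL0
    have hg' : ∑ j, (fun j => if j = jstar then 0 else g j) j • R.sroot j = 0 := by
      rw [← hg]
      apply Finset.sum_congr rfl
      intro j _
      by_cases hj : j = jstar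
      · subst hj
        simp [hGdef, hgstar]
      · simp [hGdef, hj]
    have hz := Fintype.linearIndependent_iff.mp R.sroot_indep _ hg'
    intro j
    by_cases hj : j = jstar
    · rw [hj]; exact hgstar
    · simpa [hj] using hz j
  set bC := basisOfLinearIndependentOfCardEqFinrank hGindep hcard with hbCdef
  have hbC : ⇑bC = G := coe_basisOfLinearIndependentOfCardEqFinrank _ _
  set d : Fin n → ℝ := fun j => if j = jstar then 0 else QC j / L with hddef
  have hopC : ∀ j, opS C (bC j) = d j • bC j := by
    intro j
    rw [show bC j = G j from congrFun hbC j]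
    by_cases hj : j = jstar
    · subst hj
      have hG : G j = θ := by simp [hGdef]
      have hd : d j = 0 := by simp [hddef]
      rw [hG, hd, zero_smul, opS_apply]
      apply Finset.sum_eq_zero
      intro γ hγ
      rw [hCdef, Finset.mem_filter] at hγ
      have h9 : rip γ θ = 0 := by linarith [hγ.2]
      rw [h9, zero_smul]
    · have hG : G j = R.sroot j := by simp [hGdef, hj]
      have hd : d j = QC j / L := by simp [hddef, hj]
      rw [hG, hd, opS_apply]
      exact hCeig j hj
  have htraceC : ∑ j ∈ Finset.univ.erase jstar, QC j / L = (C.card : ℝ) * L := by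
    have t1 := trace_opS (n := n) C
    have t2 := trace_diag bC (opS C) d hopC
    rw [t2] at t1
    have t3 : ∑ j, d j = ∑ j ∈ Finset.univ.erase jstar, QC j / L := by
      rw [← Finset.add_sum_erase _ d (Finset.mem_univ jstar)]
      have hd : d jstar = 0 := by simp [hddef]
      rw [hd, zero_add]
      apply Finset.sum_congr rfl
      intro j hj
      simp [hddef, (Finset.mem_erase.mp hj).1]
    have t4 : ∑ γ ∈ C, rip γ γ = (C.card : ℝ) * L := by
      have h1 : ∀ γ ∈ C, rip γ γ = L := fun γ hγ => hlen γ ((hCmem γ).mp hγ).1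
      rw [Finset.sum_congr rfl h1, Finset.sum_const, nsmul_eq_mul]
    rw [t3, t4] at t1
    exact t1
  -- edge counts
  set e : Fin n → ℕ := fun i => (B.filter (fun μ => 2 * rip μ (R.sroot i) = L)).card with hedef
  have hBmem3 : ∀ i : Fin n, i ≠ jstar → ∀ γ ∈ B, 2 * rip γ (R.sroot i) = -L ∨
      2 * rip γ (R.sroot i) = 0 ∨ 2 * rip γ (R.sroot i) = L := by
    intro i hi γ hγ
    rw [hBmem] at hγ
    rcases hz5 γ hγ.1 (R.sroot i) (R.sroot_mem i) with h|h|h|h|h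
    · exfalso
      have hγeq : γ = -(R.sroot i) := heqm2 γ hγ.1 _ (R.sroot_mem i) h
      have h0 : rip γ θ = 0 := by
        rw [hγeq, rip_neg_left, horth i hi]
        ring
      have := hγ.2
      rw [h0] at this
      linarith
    · exact Or.inl h
    · exact Or.inr (Or.inl h)
    · exact Or.inr (Or.inr h)
    · exfalso
      have hγeq : γ = R.sroot i := heq2 γ hγ.1 _ (R.sroot_mem i) h
      have h0 : rip γ θ = 0 := by rw [hγeq]; exact horth i hi
      have := hγ.2
      rw [h0] at this
      linarith
  have hecard : ∀ i : Fin n, i ≠ jstar →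
      (B.filter (fun μ => 2 * rip μ (R.sroot i) = -L)).card = e i := by
    intro i hi
    rw [hedef]
    apply Finset.card_nbij' (i := fun μ => μ + R.sroot i) (j := fun μ => μ - R.sroot i)
    · intro μ hμ
      rw [Finset.mem_coe, Finset.mem_filter] at hμ
      obtain ⟨hμB, hμip⟩ := hμ
      rw [hBmem] at hμB
      have hmem : μ + R.sroot i ∈ R.Δ := hup μ hμB.1 _ (R.sroot_mem i) hμip
      simp only [Finset.mem_coe, Finset.mem_filter]
      constructor
      · rw [hBmem]
        refine ⟨hmem, ?_⟩
        rw [rip_add_left, horth i hi]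
        linarith [hμB.2]
      · rw [rip_add_left, hlen _ (R.sroot_mem i)]
        linarith [hμip]
    · intro μ hμ
      rw [Finset.mem_coe, Finset.mem_filter] at hμ
      obtain ⟨hμB, hμip⟩ := hμ
      rw [hBmem] at hμB
      have hmem : μ - R.sroot i ∈ R.Δ := hdown μ hμB.1 _ (R.sroot_mem i) hμip
      simp only [Finset.mem_coe, Finset.mem_filter]
      constructor
      · rw [hBmem]
        refine ⟨hmem, ?_⟩
        rw [rip_sub_left, horth i hi]
        linarith [hμB.2]
      · rw [rip_sub_left, hlen _ (R.sroot_mem i)]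
        linarith [hμip]
    · intro μ _
      dsimp only
      abel
    · intro μ _
      dsimp only
      abel
  -- the key per-index identity
  have hkey : ∀ i : Fin n, i ≠ jstar → Λ * L = (e i : ℝ) * L^2 + QC i := by
    intro i hi
    have hsplitB : ∑ γ ∈ B, rip γ (R.sroot i)^2
        = (∑ γ ∈ B.filter (fun μ => 2 * rip μ (R.sroot i) = -L), rip γ (R.sroot i)^2)
        + (∑ γ ∈ B.filter (fun μ => 2 * rip μ (R.sroot i) = 0), rip γ (R.sroot i)^2)
        + (∑ γ ∈ B.filter (fun μ => 2 * rip μ (R.sroot i) = L), rip γ (R.sroot i)^2) := by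
      have step : ∀ γ ∈ B, rip γ (R.sroot i)^2 =
          (if 2 * rip γ (R.sroot i) = -L then rip γ (R.sroot i)^2 else 0)
          + (if 2 * rip γ (R.sroot i) = 0 then rip γ (R.sroot i)^2 else 0)
          + (if 2 * rip γ (R.sroot i) = L then rip γ (R.sroot i)^2 else 0) := by
        intro γ hγ
        rcases hBmem3 i hi γ hγ with h|h|h <;> rw [h]
        · rw [if_pos rfl, if_neg (by intro hh; linarith), if_neg (by intro hh; linarith)]
          ring
        · rw [if_neg (by intro hh; linarith), if_pos rfl, if_neg (by intro hh; linarith)]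
          ring
        · rw [if_neg (by intro hh; linarith), if_neg (by intro hh; linarith), if_pos rfl]
          ring
      rw [Finset.sum_congr rfl step, Finset.sum_add_distrib, Finset.sum_add_distrib,
        ← Finset.sum_filter, ← Finset.sum_filter, ← Finset.sum_filter]
    have hconstm : ∑ γ ∈ B.filter (fun μ => 2 * rip μ (R.sroot i) = -L), rip γ (R.sroot i)^2
        = (e i : ℝ) * (L^2/4) := by
      have h1 : ∀ γ ∈ B.filter (fun μ => 2 * rip μ (R.sroot i) = -L),
          rip γ (R.sroot i)^2 = L^2/4 := by
        intro γ hγ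
        have h2 := (Finset.mem_filter.mp hγ).2
        have h3 : rip γ (R.sroot i) = -(L/2) := by linarith
        rw [h3]
        ring
      rw [Finset.sum_congr rfl h1, Finset.sum_const, hecard i hi, nsmul_eq_mul]
    have hconst0 : ∑ γ ∈ B.filter (fun μ => 2 * rip μ (R.sroot i) = 0), rip γ (R.sroot i)^2
        = 0 := by
      apply Finset.sum_eq_zero
      intro γ hγ
      have h2 := (Finset.mem_filter.mp hγ).2
      have h3 : rip γ (R.sroot i) = 0 := by linarith
      rw [h3]
      ring
    have hconstp : ∑ γ ∈ B.filter (fun μ => 2 * rip μ (R.sroot i) = L), rip γ (R.sroot i)^2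
        = (e i : ℝ) * (L^2/4) := by
      have h1 : ∀ γ ∈ B.filter (fun μ => 2 * rip μ (R.sroot i) = L),
          rip γ (R.sroot i)^2 = L^2/4 := by
        intro γ hγ
        have h2 := (Finset.mem_filter.mp hγ).2
        have h3 : rip γ (R.sroot i) = L/2 := by linarith
        rw [h3]
        ring
      rw [Finset.sum_congr rfl h1, Finset.sum_const, nsmul_eq_mul]
    have h5 := hsplit (fun γ => rip γ (R.sroot i)^2)
    rw [hsqα i, hA, Finset.sum_singleton, hA', Finset.sum_singleton] at h5
    have hθi : rip θ (R.sroot i) = 0 := by rw [rip_comm]; exact horth i hi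
    have hθi' : rip (-θ) (R.sroot i) = 0 := by rw [rip_neg_left, hθi]; ring
    rw [hθi, hθi'] at h5
    have hB'B := hBB' (fun γ => rip γ (R.sroot i)^2)
      (fun x => by show rip (-x) (R.sroot i)^2 = rip x (R.sroot i)^2; rw [rip_neg_left]; ring)
    rw [hB'B, hsplitB, hconstm, hconst0, hconstp] at h5
    have hCQ : (∑ γ ∈ C, rip γ (R.sroot i)^2) = QC i := rfl
    rw [hCQ] at h5
    linarith [h5]
  -- equation (1)
  have heq1 : Λ * L = 2*L^2 + (m:ℝ) * (L^2/2) := by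
    have h5 := hsplit (fun γ => rip γ θ^2)
    rw [hsqθ, hA, Finset.sum_singleton, hA', Finset.sum_singleton] at h5
    have hBc : ∑ γ ∈ B, rip γ θ^2 = (m:ℝ) * (L^2/4) := by
      have h1 : ∀ γ ∈ B, rip γ θ^2 = L^2/4 := by
        intro γ hγ
        have h2 := ((hBmem γ).mp hγ).2
        have h3 : rip γ θ = L/2 := by linarith
        rw [h3]
        ring
      rw [Finset.sum_congr rfl h1, Finset.sum_const, nsmul_eq_mul]
    have hCc : ∑ γ ∈ C, rip γ θ^2 = 0 := by
      apply Finset.sum_eq_zero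
      intro γ hγ
      have h2 := ((hCmem γ).mp hγ).2
      have h3 : rip γ θ = 0 := by linarith
      rw [h3]
      ring
    have hB'c := hBB' (fun γ => rip γ θ^2)
      (fun x => by show rip (-x) θ^2 = rip x θ^2; rw [rip_neg_left]; ring)
    rw [hB'c, hBc, hCc] at h5
    have e1 : rip θ θ = L := hLdef.symm
    have e2 : rip (-θ) θ = -L := by rw [rip_neg_left, ← hLdef]
    rw [e1, e2] at h5
    nlinarith [h5]
  -- equation (4): cardinality decomposition
  have heq4 : (R.Δ.card : ℝ) = 2 + 2*(m:ℝ) + (C.card : ℝ) := by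
    have h5 := hsplit (fun _ => (1:ℝ))
    rw [hA, Finset.sum_singleton, hA', Finset.sum_singleton] at h5
    rw [hBB' (fun _ => (1:ℝ)) (fun _ => rfl)] at h5
    simp only [Finset.sum_const, nsmul_eq_mul, mul_one] at h5
    rw [h5, hmdef]
    ring
  -- summed key equation
  set E : ℕ := ∑ i ∈ Finset.univ.erase jstar, e i with hEdef
  have heq2sum : ((n:ℝ) - 1) * (Λ * L)
      = (E:ℝ) * L^2 + ∑ j ∈ Finset.univ.erase jstar, QC j := by
    have h1 : ∑ _i ∈ Finset.univ.erase jstar, (Λ * L) = ((n:ℝ)-1) * (Λ*L) := by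
      rw [Finset.sum_const, Finset.card_erase_of_mem (Finset.mem_univ jstar),
        Finset.card_univ, Fintype.card_fin, nsmul_eq_mul]
      congr 1
      rw [Nat.cast_sub (by omega : 1 ≤ n), Nat.cast_one]
    rw [← h1]
    rw [Finset.sum_congr rfl (fun i hi => hkey i (Finset.mem_erase.mp hi).1)]
    rw [Finset.sum_add_distrib]
    congr 1
    rw [← Finset.sum_mul]
    congr 1
    rw [hEdef]
    exact (Nat.cast_sum _ _).symm
  -- equation (3): trace over C
  have heq3 : ∑ j ∈ Finset.univ.erase jstar, QC j = (C.card : ℝ) * L^2 := by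
    rw [← Finset.sum_div] at htraceC
    have h := (div_eq_iff hL0).mp htraceC
    rw [h]
    ring
  -- real-number conclusions
  have hDreal : (2*(R.Δ.card:ℝ) - (n:ℝ)*(m:ℝ) - 4*(n:ℝ)) * L^2 = 0 := by
    linear_combination (-2*L) * htraceΔ + (2*(n:ℝ)) * heq1
  have hD2 : 2*(R.Δ.card:ℝ) = (n:ℝ)*(m:ℝ) + 4*(n:ℝ) := by
    rcases mul_eq_zero.mp hDreal with h | h
    · linarith
    · exact absurd h (pow_ne_zero 2 hL0)
  have hEreal : (2*(E:ℝ) - 3*(m:ℝ)) * L^2 = 0 := by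
    linear_combination (-2) * heq2sum + (-2) * heq3 + (2*L^2) * heq4
      + (2*L) * htraceΔ + (-2) * heq1
  have hE2 : 2*(E:ℝ) = 3*(m:ℝ) := by
    rcases mul_eq_zero.mp hEreal with h | h
    · linarith
    · exact absurd h (pow_ne_zero 2 hL0)
  -- back to ℕ
  have hD2n : 2 * R.Δ.card = n * m + 4 * n := by exact_mod_cast hD2
  have hE2n : 2 * E = 3 * m := by exact_mod_cast hE2
  obtain ⟨k, hk⟩ := hmeven
  have hDn : R.Δ.card = n * (k + 2) := by
    apply Nat.eq_of_mul_eq_mul_left (show 0 < 2 by norm_num)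
    rw [hD2n, hk]
    ring
  have hdiv : R.Δ.card / n = k + 2 := by rw [hDn, Nat.mul_div_cancel_left _ hn]
  -- the edge set cardinality
  have hI : Finset.univ.filter (fun i => (∑ t, R.sroot i t * θ t) = 0)
      = Finset.univ.erase jstar := by
    ext j
    simp only [Finset.mem_filter, Finset.mem_univ, true_and, Finset.mem_erase, and_true]
    constructor
    · intro h hj
      subst hj
      exact (hmem_iff j).mpr rfl h
    · intro hj
      by_contra h
      exact hj ((hmem_iff j).mp h)
  have hedges : (edgesOneMin R θ).card = E := by
    have h0 : edgesOneMin R θ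
        = ((B ×ˢ (Finset.univ.filter (fun i => (∑ t, R.sroot i t * θ t) = 0))).filter
            (fun p => p.1 - R.sroot p.2 ∈ B)) := by
      rw [edgesOneMin, hBD]
    rw [h0, Finset.card_filter, Finset.sum_product, Finset.sum_comm, hI, hEdef]
    apply Finset.sum_congr rfl
    intro i hi
    have hine := (Finset.mem_erase.mp hi).1
    have hfc : B.filter (fun μ => μ - R.sroot i ∈ B)
        = B.filter (fun μ => 2 * rip μ (R.sroot i) = L) := by
      apply Finset.filter_congr
      intro μ hμ
      have hμ' := (hBmem μ).mp hμ
      constructor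
      · intro h
        exact hsub_ip μ hμ'.1 _ (R.sroot_mem i) (((hBmem _).mp h).1)
      · intro h
        rw [hBmem]
        refine ⟨hdown μ hμ'.1 _ (R.sroot_mem i) h, ?_⟩
        rw [rip_sub_left, horth i hine]
        linarith [hμ'.2]
    rw [← Finset.card_filter, hfc]
  -- final assembly
  have hm2k : m = 2 * k := by omega
  have hEk : E = 3 * k := by omega
  refine ⟨?_, ?_, ?_⟩
  · rw [hBD, hdiv, ← hmdef]
    omega
  · rw [hedges, hdiv]
    omega
  · rw [hedges, hBD, ← hmdef]
    omega
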